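/- arXiv:1703.03932 — 2 statements merged into one kernel-verified Lean document; each statement's English description precedes it below -/
import Mathlib

section
/- For any arithmetic progression of natural numbers with common difference d ≥ 1, i.e., T(n) = a + n·d, there is no index M such that T(n) has an even number of decimal digits for all n ≥ M. Equivalently, the progression has terms with an odd number of decimal digits infinitely often. -/
/-!
An arithmetic progression with difference `d` meets every window `[N, N + d)` above its first
term. Choosing `N = 10 ^ e` with `e` even and `10 ^ e` exceeding both `d` and the term of index
`M`, the progression has a term of index `≥ M` in `[10 ^ e, 10 ^ e + d) ⊆ [10 ^ e, 10 ^ (e + 1))`,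
and that term has exactly `e + 1` digits.
-/

theorem Nat.exists_add_mul_mem_Ico {a d N : ℕ} (hd : 0 < d) (haN : a ≤ N) :
    ∃ n, a + n * d ∈ Set.Ico N (N + d) := by
  refine ⟨(N - a + d - 1) / d, ?_, ?_⟩
  · have := Nat.lt_div_mul_add (a := N - a + d - 1) hd
    omega
  · have := Nat.div_mul_le_self (N - a + d - 1) d
    omega

theorem Nat.length_digits_eq_of_mem_Ico {b k m : ℕ} (hb : 1 < b)
    (hm : m ∈ Set.Ico (b ^ k) (b ^ (k + 1))) : (b.digits m).length = k + 1 :=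
  le_antisymm ((Nat.digits_length_le_iff hb m).2 hm.2)
    ((Nat.lt_digits_length_iff hb m).2 hm.1)

theorem stmt_5_general (a d : ℕ) (hd : 1 ≤ d) :
    ¬ ∃ M : ℕ, ∀ n : ℕ, M ≤ n → Even (Nat.digits 10 (a + n * d)).length := by
  rintro ⟨M, hM⟩
  set e := 2 * (a + M * d + d)
  have he : a + M * d + d < 10 ^ e :=
    (by omega : a + M * d + d < e).trans (Nat.lt_pow_self (by norm_num))
  obtain ⟨n, hn⟩ := Nat.exists_add_mul_mem_Ico (a := a + M * d) (N := 10 ^ e) hd (by omega)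
  have hlen : (Nat.digits 10 (a + (M + n) * d)).length = e + 1 := by
    rw [add_mul, ← add_assoc]
    refine Nat.length_digits_eq_of_mem_Ico (by norm_num) ⟨hn.1, ?_⟩
    have := hn.2
    rw [pow_succ]
    omega
  have := hM (M + n) (Nat.le_add_right M n)
  rw [hlen, Nat.even_add_one] at this
  exact this (even_two_mul _)

theorem stmt_5 (a d : ℕ) (ha : 1 ≤ a) (hd : 1 ≤ d) :
    ¬ ∃ M : ℕ, ∀ n : ℕ, M ≤ n → Even (Nat.digits 10 (a + n * d)).length :=
  stmt_5_general a d hd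
end

section
/- There is no infinite arithmetic progression of natural numbers with positive common difference all of whose terms are base-10 palindromes. That is, for all a and d ≥ 1, there exists n such that a + n·d is not a palindrome. -/
/-!
Let `d < 10 ^ k` and let `N = 10 ^ (j + k)` with `10 ^ j` much larger than `d`. The progression
has two consecutive terms `x` and `x + d` in `[N, N + 10 ^ j)`, so both have top `k + 1` digits
`1 0 … 0`. Being palindromes, both have bottom `k + 1` digits `0 … 0 1`, i.e. both are
`≡ 1 [MOD 10 ^ (k + 1)]`; hence `10 ^ (k + 1) ∣ d`, which is impossible for
`0 < d < 10 ^ (k + 1)`.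
-/

def IsPalindrome10 (n : ℕ) : Prop := Nat.digits 10 n = (Nat.digits 10 n).reverse

namespace Nat

theorem exists_add_mul_mem_Ico_s6 {a d N : ℕ} (hd : 0 < d) (ha : a ≤ N) :
    ∃ n, a + n * d ∈ Set.Ico N (N + d) := by
  refine ⟨(N + d - 1 - a) / d, ?_, ?_⟩
  · have := Nat.lt_div_mul_add (a := N + d - 1 - a) hd
    omega
  · have := Nat.div_mul_le_self (N + d - 1 - a) d
    omega

theorem div_pow_eq_pow_of_le_of_lt {b j k x : ℕ} (h₁ : b ^ (j + k) ≤ x)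
    (h₂ : x < b ^ (j + k) + b ^ j) : x / b ^ j = b ^ k := by
  apply Nat.div_eq_of_lt_le
  · rwa [← pow_add, add_comm]
  · rwa [add_mul, one_mul, ← pow_add, add_comm k]

theorem drop_digits_eq_digits_div_pow {b : ℕ} (hb : 1 < b) (j x : ℕ) :
    (digits b x).drop j = digits b (x / b ^ j) := by
  rw [self_div_pow_eq_ofDigits_drop j x hb, digits_ofDigits b hb _
    (fun _ h ↦ digits_lt_base hb (List.mem_of_mem_drop h))]
  intro h
  rw [List.getLast_drop]
  exact getLast_digit_ne_zero b
    ((digits_ne_nil_iff_ne_zero (b := b)).mp fun h' ↦ h (by simp [h']))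

theorem mod_pow_succ_eq_one_of_palindrome {b j k x : ℕ} (hb : 1 < b)
    (hpal : digits b x = (digits b x).reverse) (hx : x / b ^ j = b ^ k) :
    x % b ^ (k + 1) = 1 := by
  have htop : (digits b x).drop j = List.replicate k 0 ++ [1] := by
    rw [drop_digits_eq_digits_div_pow hb, hx]
    simpa [digits_of_lt b 1 one_ne_zero hb] using digits_base_pow_mul hb (k := k) (m := 1) one_pos
  have hlen : (digits b x).length - (k + 1) = j := by
    have := congrArg List.length htop
    simp only [List.length_drop, List.length_append, List.length_replicate,
      List.length_singleton] at this
    omega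
  rw [self_mod_pow_eq_ofDigits_take _ _ hb, hpal, List.take_reverse, hlen, htop]
  simp [ofDigits_cons, ofDigits_replicate_zero]

end Nat

theorem stmt_6 (a d : ℕ) (hd : 1 ≤ d) :
    ∃ n : ℕ, ¬ IsPalindrome10 (a + n * d) := by
  by_contra! hpal
  -- large enough that `a ≤ 10 ^ (j + d)` and `2 * d ≤ 10 ^ j`
  set j := a + 2 * d with hj_def
  have hj : j < 10 ^ j := Nat.lt_pow_self (by norm_num)
  have hjd : j + d < 10 ^ (j + d) := Nat.lt_pow_self (by norm_num)
  have hd' : d + 1 < 10 ^ (d + 1) := Nat.lt_pow_self (by norm_num)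
  obtain ⟨n, hlo, hhi⟩ := Nat.exists_add_mul_mem_Ico_s6 (a := a) (N := 10 ^ (j + d)) hd (by omega)
  have hx : (a + n * d) % 10 ^ (d + 1) = 1 :=
    Nat.mod_pow_succ_eq_one_of_palindrome (j := j) (by norm_num) (hpal n)
      (Nat.div_pow_eq_pow_of_le_of_lt hlo (by omega))
  have hpal_next : IsPalindrome10 (a + n * d + d) := by
    simpa only [add_mul, one_mul, add_assoc] using hpal (n + 1)
  have hxd : (a + n * d + d) % 10 ^ (d + 1) = 1 :=
    Nat.mod_pow_succ_eq_one_of_palindrome (j := j) (by norm_num) hpal_next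
      (Nat.div_pow_eq_pow_of_le_of_lt (by omega) (by omega))
  have hdvd : 10 ^ (d + 1) ∣ d := Nat.modEq_zero_iff_dvd.mp <|
    Nat.ModEq.add_left_cancel' (a + n * d) (hxd.trans hx.symm)
  exact absurd (Nat.le_of_dvd hd hdvd) (by omega)
end
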